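/- For every ε > 0 there exist constants c, C > 0 (depending on ε and φ) such that for all real t ≥ 1: 1 − Σ_{k ∈ ℕ, (1−ε)t ≤ k ≤ (2+ε)t} ω_t(k) ≤ C·e^{−cεt}. -/

import Mathlib

lemma tsum_pow_div_factorial_eq (x : ℝ) :
    ∑' k : ℕ, x ^ k / (Nat.factorial k : ℝ) = Real.exp x := by
  rw [Real.exp_eq_exp_ℝ, NormedSpace.exp_eq_tsum_div]

lemma exp_le_one_add_add_sq {x : ℝ} (hx : |x| ≤ 1) : Real.exp x ≤ 1 + x + x ^ 2 := by
  have h := Real.exp_bound hx (n := 2) (by norm_num)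
  have hs : (∑ m ∈ Finset.range 2, x ^ m / (Nat.factorial m : ℝ)) = 1 + x := by
    simp [Finset.sum_range_succ]
  rw [hs] at h
  have h2 := (abs_le.mp h).2
  have h3 : |x| ^ 2 = x ^ 2 := sq_abs x
  rw [h3] at h2
  norm_num [Nat.factorial] at h2
  nlinarith [sq_nonneg x]

lemma chernoff_tail (ε t s : ℝ) (hε : 0 < ε) (ht : 1 ≤ t) (hs1 : 1 ≤ s) (hs2 : s ≤ 2) :
    1 - ∑' k : ℕ, (if (1 - ε) * t ≤ (k : ℝ) ∧ (k : ℝ) ≤ (2 + ε) * t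
          then Real.exp (-(s * t)) * (s * t) ^ k / (Nat.factorial k : ℝ) else 0)
      ≤ 2 * Real.exp (-(min (ε / 4) 1 / 2 * ε * t)) := by
  set θ := min (ε / 4) 1 with hθdef
  have hθpos : 0 < θ := lt_min (by linarith) one_pos
  have hθ1 : θ ≤ 1 := min_le_right _ _
  have hθε : θ ≤ ε / 4 := min_le_left _ _
  set L := s * t with hLdef
  have hL1 : 1 ≤ L := by nlinarith
  have hLt : t ≤ L := by nlinarith
  have hL2t : L ≤ 2 * t := by nlinarith
  have hL0 : 0 < L := by linarith
  set a1 := (1 - ε) * t with ha1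
  set a2 := (2 + ε) * t with ha2
  set p : ℕ → ℝ := fun k => Real.exp (-L) * L ^ k / (Nat.factorial k : ℝ) with hpdef
  set r : ℕ → ℝ := fun k => if (1 - ε) * t ≤ (k : ℝ) ∧ (k : ℝ) ≤ a2 then p k else 0 with hrdef
  have hp0 : ∀ k, 0 ≤ p k := fun k => by
    apply div_nonneg (mul_nonneg (Real.exp_pos _).le (pow_nonneg hL0.le _)) (Nat.cast_nonneg _)
  have hsp : Summable p := by
    simpa only [hpdef, mul_div_assoc] using (Real.summable_pow_div_factorial L).mul_left (Real.exp (-L))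
  have htot : ∑' k, p k = 1 := by
    simp only [hpdef, mul_div_assoc]
    rw [tsum_mul_left, tsum_pow_div_factorial_eq, ← Real.exp_add]
    simp
  set E1 := Real.exp θ with hE1def
  set E2 := Real.exp (-θ) with hE2def
  set D1 : ℕ → ℝ := fun k =>
    Real.exp (-(θ * a2)) * (Real.exp (-L) * ((L * E1) ^ k / (Nat.factorial k : ℝ))) with hD1def
  set D2 : ℕ → ℝ := fun k =>
    Real.exp (θ * a1) * (Real.exp (-L) * ((L * E2) ^ k / (Nat.factorial k : ℝ))) with hD2def
  have hsD1 : Summable D1 := (((Real.summable_pow_div_factorial _).mul_left _).mul_left _)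
  have hsD2 : Summable D2 := (((Real.summable_pow_div_factorial _).mul_left _).mul_left _)
  have hD1k : ∀ k : ℕ, D1 k = p k * Real.exp (θ * k - θ * a2) := by
    intro k
    have h1 : (L * E1) ^ k = L ^ k * Real.exp (θ * k) := by
      rw [mul_pow, hE1def, ← Real.exp_nat_mul, mul_comm (k : ℝ) θ]
    simp only [hD1def, hpdef, h1, Real.exp_sub, Real.exp_neg]
    ring
  have hD2k : ∀ k : ℕ, D2 k = p k * Real.exp (θ * a1 - θ * k) := by
    intro k
    have h1 : (L * E2) ^ k = L ^ k * Real.exp (-(θ * k)) := by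
      rw [mul_pow, hE2def, ← Real.exp_nat_mul, mul_comm (k : ℝ) (-θ)]
      ring_nf
    simp only [hD2def, hpdef, h1, Real.exp_sub, Real.exp_neg]
    ring
  have hD1nn : ∀ k, 0 ≤ D1 k := fun k => by
    rw [hD1k k]; exact mul_nonneg (hp0 k) (Real.exp_pos _).le
  have hD2nn : ∀ k, 0 ≤ D2 k := fun k => by
    rw [hD2k k]; exact mul_nonneg (hp0 k) (Real.exp_pos _).le
  have key : ∀ k : ℕ, p k ≤ D1 k + D2 k + r k := by
    intro k
    by_cases hc : (1 - ε) * t ≤ (k : ℝ) ∧ (k : ℝ) ≤ a2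
    · have : r k = p k := by rw [hrdef]; simp [hc]
      rw [this]
      have := hD1nn k; have := hD2nn k; linarith
    · have hr0 : r k = 0 := by rw [hrdef]; simp [hc]
      rw [hr0, add_zero]
      rcases not_and_or.mp hc with h | h
      · -- k < a1 : use D2
        push_neg at h
        have h1 : 1 ≤ Real.exp (θ * a1 - θ * k) := by
          apply Real.one_le_exp
          have : (k : ℝ) ≤ a1 := h.le
          nlinarith
        have : p k ≤ D2 k := by
          rw [hD2k k]; exact le_mul_of_one_le_right (hp0 k) h1
        have := hD1nn k; linarith
      · push_neg at h
        have h1 : 1 ≤ Real.exp (θ * k - θ * a2) := by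
          apply Real.one_le_exp
          have : a2 ≤ (k : ℝ) := h.le
          nlinarith
        have : p k ≤ D1 k := by
          rw [hD1k k]; exact le_mul_of_one_le_right (hp0 k) h1
        have := hD2nn k; linarith
  have hsr : Summable r := by
    apply Summable.of_nonneg_of_le _ _ hsp
    · intro k; rw [hrdef]; dsimp only; split
      · exact hp0 k
      · exact le_rfl
    · intro k; rw [hrdef]; dsimp only; split
      · exact le_rfl
      · exact hp0 k
  have hbig : Summable (fun k => D1 k + D2 k + r k) := (hsD1.add hsD2).add hsr
  have hle : ∑' k, p k ≤ ∑' k, (D1 k + D2 k + r k) := Summable.tsum_le_tsum key hsp hbig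
  have hsplit : ∑' k, (D1 k + D2 k + r k) = (∑' k, D1 k) + (∑' k, D2 k) + ∑' k, r k := by
    rw [Summable.tsum_add (hsD1.add hsD2) hsr, Summable.tsum_add hsD1 hsD2]
  have hT1 : ∑' k, D1 k = Real.exp (L * E1 - L - θ * a2) := by
    simp only [hD1def]
    rw [tsum_mul_left, tsum_mul_left, tsum_pow_div_factorial_eq, ← Real.exp_add, ← Real.exp_add]
    ring_nf
  have hT2 : ∑' k, D2 k = Real.exp (L * E2 - L + θ * a1) := by
    simp only [hD2def]
    rw [tsum_mul_left, tsum_mul_left, tsum_pow_div_factorial_eq, ← Real.exp_add, ← Real.exp_add]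
    ring_nf
  have hE1le : E1 ≤ 1 + θ + θ ^ 2 :=
    exp_le_one_add_add_sq (abs_le.mpr ⟨by linarith, hθ1⟩)
  have hE1ge : 1 ≤ E1 := Real.one_le_exp hθpos.le
  have hE2le : E2 ≤ 1 - θ + θ ^ 2 := by
    have := exp_le_one_add_add_sq (x := -θ) (abs_le.mpr ⟨by linarith, by linarith⟩)
    rw [neg_sq] at this; rw [hE2def]; linarith
  have h3 : θ ^ 2 ≤ θ * (ε / 4) := by nlinarith [mul_le_mul_of_nonneg_left hθε hθpos.le]
  have hB1 : L * E1 - L - θ * a2 ≤ -(θ / 2 * ε * t) := by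
    rw [ha2]
    have h1 : L * (E1 - 1) ≤ 2 * t * (E1 - 1) :=
      mul_le_mul_of_nonneg_right hL2t (by linarith)
    have h2 : 2 * t * (E1 - 1) ≤ 2 * t * (θ + θ ^ 2) :=
      mul_le_mul_of_nonneg_left (by linarith) (by linarith)
    have h4 : 2 * t * (θ ^ 2) ≤ 2 * t * (θ * (ε / 4)) :=
      mul_le_mul_of_nonneg_left h3 (by linarith)
    linarith [h1, h2, h4]
  have hB2 : L * E2 - L + θ * a1 ≤ -(θ / 2 * ε * t) := by
    rw [ha1]
    have hθsq : θ ^ 2 ≤ θ := by nlinarith [mul_le_mul_of_nonneg_left hθ1 hθpos.le]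
    have hE2le1 : E2 - 1 ≤ 0 := by linarith
    have h1 : L * (E2 - 1) ≤ t * (E2 - 1) :=
      mul_le_mul_of_nonpos_right hLt hE2le1
    have h2 : t * (E2 - 1) ≤ t * (-θ + θ ^ 2) :=
      mul_le_mul_of_nonneg_left (by linarith) (by linarith)
    have h4 : t * (θ ^ 2) ≤ t * (θ * (ε / 4)) :=
      mul_le_mul_of_nonneg_left h3 (by linarith)
    have h5 : 0 ≤ t * (θ * ε) := by positivity
    linarith [h1, h2, h4, h5]
  have hgoal : 1 - ∑' k, r k ≤ 2 * Real.exp (-(θ / 2 * ε * t)) := by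
    have e1 : ∑' k, D1 k ≤ Real.exp (-(θ / 2 * ε * t)) := by
      rw [hT1]; exact Real.exp_le_exp.mpr hB1
    have e2 : ∑' k, D2 k ≤ Real.exp (-(θ / 2 * ε * t)) := by
      rw [hT2]; exact Real.exp_le_exp.mpr hB2
    rw [htot] at hle; rw [hsplit] at hle
    linarith
  exact hgoal

open MeasureTheory

/-- The Laplace-transform weights `ω_t(k) = ∫_1^2 φ(s) e^{−st}(st)^k/k! ds`. -/
noncomputable def omegaWeight (φ : ℝ → ℝ) (t : ℝ) (k : ℕ) : ℝ :=
  ∫ s in (1 : ℝ)..2, φ s * (Real.exp (-(s * t)) * (s * t) ^ k / (Nat.factorial k : ℝ))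

/-- For a smooth bump `φ ≥ 0` supported in `[1,2]` with `∫ φ = 1`: for every `ε > 0`
there are constants `c, C > 0` (depending on `ε` and `φ`) such that for all `t ≥ 1`,
`1 − Σ_{(1−ε)t ≤ k ≤ (2+ε)t} ω_t(k) ≤ C e^{−cεt}`. -/
theorem omegaWeight_concentration (φ : ℝ → ℝ)
    (hsmooth : ContDiff ℝ (⊤ : ℕ∞) φ) (hnonneg : ∀ x, 0 ≤ φ x)
    (hsupp : Function.support φ ⊆ Set.Icc 1 2)
    (hint : ∫ x, φ x = 1) :
    ∀ ε : ℝ, 0 < ε → ∃ c C : ℝ, 0 < c ∧ 0 < C ∧ ∀ t : ℝ, 1 ≤ t →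
      1 - (∑' k : ℕ, if (1 - ε) * t ≤ (k : ℝ) ∧ (k : ℝ) ≤ (2 + ε) * t
            then omegaWeight φ t k else 0)
        ≤ C * Real.exp (-(c * ε * t)) := by
  intro ε hε
  refine ⟨min (ε / 4) 1 / 2, 2, by positivity, by norm_num, ?_⟩
  intro t ht
  have ht0 : (0:ℝ) < t := by linarith
  set f : ℕ → ℝ → ℝ :=
    fun k s => φ s * (Real.exp (-(s * t)) * (s * t) ^ k / (Nat.factorial k : ℝ)) with hf
  have hcont : ∀ k : ℕ, Continuous (f k) := by
    intro k
    have h1 : Continuous fun s : ℝ => s * t := continuous_id.mul continuous_const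
    exact hsmooth.continuous.mul
      (((Real.continuous_exp.comp h1.neg).mul (h1.pow k)).div_const _)
  set N := ⌈(2 + ε) * t⌉₊ with hN
  have hcond0 : ∀ k : ℕ, k ∉ Finset.range (N + 1) →
      ¬((1 - ε) * t ≤ (k : ℝ) ∧ (k : ℝ) ≤ (2 + ε) * t) := by
    intro k hk
    rintro ⟨-, h2⟩
    apply hk
    rw [Finset.mem_range]
    have h3 : (k : ℝ) ≤ (N : ℝ) := h2.trans (Nat.le_ceil _)
    exact Nat.lt_succ_of_le (Nat.cast_le.mp h3)
  have hstep1 : (∑' k : ℕ, if (1 - ε) * t ≤ (k : ℝ) ∧ (k : ℝ) ≤ (2 + ε) * t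
        then omegaWeight φ t k else 0)
      = ∑ k ∈ Finset.range (N + 1), if (1 - ε) * t ≤ (k : ℝ) ∧ (k : ℝ) ≤ (2 + ε) * t
        then omegaWeight φ t k else 0 :=
    tsum_eq_sum (fun k hk => if_neg (hcond0 k hk))
  have hii : ∀ k : ℕ, IntervalIntegrable
      (fun s => if (1 - ε) * t ≤ (k : ℝ) ∧ (k : ℝ) ≤ (2 + ε) * t then f k s else 0)
      volume 1 2 := by
    intro k
    by_cases hc : (1 - ε) * t ≤ (k : ℝ) ∧ (k : ℝ) ≤ (2 + ε) * t
    · simp only [if_pos hc]; exact (hcont k).intervalIntegrable _ _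
    · simp only [if_neg hc]; exact intervalIntegrable_const
  have hstep2 : ∀ k : ℕ, (if (1 - ε) * t ≤ (k : ℝ) ∧ (k : ℝ) ≤ (2 + ε) * t
        then omegaWeight φ t k else 0)
      = ∫ s in (1:ℝ)..2,
          (if (1 - ε) * t ≤ (k : ℝ) ∧ (k : ℝ) ≤ (2 + ε) * t then f k s else 0) := by
    intro k
    by_cases hc : (1 - ε) * t ≤ (k : ℝ) ∧ (k : ℝ) ≤ (2 + ε) * t
    · simp only [if_pos hc]; rfl
    · simp only [if_neg hc]
      exact (intervalIntegral.integral_zero).symm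
  set g : ℝ → ℝ := fun s => ∑ k ∈ Finset.range (N + 1),
      (if (1 - ε) * t ≤ (k : ℝ) ∧ (k : ℝ) ≤ (2 + ε) * t
        then Real.exp (-(s * t)) * (s * t) ^ k / (Nat.factorial k : ℝ) else 0) with hg
  have hfactor : ∀ s : ℝ, (∑ k ∈ Finset.range (N + 1),
      (if (1 - ε) * t ≤ (k : ℝ) ∧ (k : ℝ) ≤ (2 + ε) * t then f k s else 0)) = φ s * g s := by
    intro s
    rw [hg, Finset.mul_sum]
    refine Finset.sum_congr rfl fun k _ => ?_
    by_cases hc : (1 - ε) * t ≤ (k : ℝ) ∧ (k : ℝ) ≤ (2 + ε) * t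
    · simp only [if_pos hc, hf]
    · simp only [if_neg hc, mul_zero]
  have hstep3 : (∑ k ∈ Finset.range (N + 1),
        if (1 - ε) * t ≤ (k : ℝ) ∧ (k : ℝ) ≤ (2 + ε) * t then omegaWeight φ t k else 0)
      = ∫ s in (1:ℝ)..2, φ s * g s := by
    rw [Finset.sum_congr rfl (fun k _ => hstep2 k),
      ← intervalIntegral.integral_finset_sum (fun k _ => hii k)]
    exact intervalIntegral.integral_congr (fun s _ => hfactor s)
  have hφint : (∫ s in (1:ℝ)..2, φ s) = 1 := by
    rw [intervalIntegral.integral_of_le (by norm_num : (1:ℝ) ≤ 2),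
      ← MeasureTheory.integral_Icc_eq_integral_Ioc]
    rw [setIntegral_eq_integral_of_forall_compl_eq_zero
      (fun x hx => Function.notMem_support.mp fun h => hx (hsupp h))]
    exact hint
  have hchern : ∀ s ∈ Set.Icc (1:ℝ) 2,
      1 - g s ≤ 2 * Real.exp (-(min (ε / 4) 1 / 2 * ε * t)) := by
    intro s hs
    have h1 := chernoff_tail ε t s hε ht hs.1 hs.2
    have h2 : (∑' k : ℕ, (if (1 - ε) * t ≤ (k : ℝ) ∧ (k : ℝ) ≤ (2 + ε) * t
          then Real.exp (-(s * t)) * (s * t) ^ k / (Nat.factorial k : ℝ) else 0)) = g s :=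
      tsum_eq_sum (fun k hk => if_neg (hcond0 k hk))
    rw [h2] at h1
    exact h1
  have hgcont : Continuous g := by
    apply continuous_finset_sum
    intro k _
    by_cases hc : (1 - ε) * t ≤ (k : ℝ) ∧ (k : ℝ) ≤ (2 + ε) * t
    · simp only [if_pos hc]
      have h1 : Continuous fun s : ℝ => s * t := continuous_id.mul continuous_const
      exact ((Real.continuous_exp.comp h1.neg).mul (h1.pow k)).div_const _
    · simp only [if_neg hc]; exact continuous_const
  have hIφ : IntervalIntegrable φ volume 1 2 :=
    hsmooth.continuous.intervalIntegrable _ _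
  have hIφg : IntervalIntegrable (fun s => φ s * g s) volume 1 2 :=
    (hsmooth.continuous.mul hgcont).intervalIntegrable _ _
  set M := 2 * Real.exp (-(min (ε / 4) 1 / 2 * ε * t)) with hM
  have hmono : (∫ s in (1:ℝ)..2, (φ s - φ s * g s)) ≤ ∫ s in (1:ℝ)..2, φ s * M := by
    apply intervalIntegral.integral_mono_on (by norm_num : (1:ℝ) ≤ 2)
      (hIφ.sub hIφg)
      ((hsmooth.continuous.mul continuous_const).intervalIntegrable _ _)
    intro x hx
    have h1 := mul_le_mul_of_nonneg_left (hchern x hx) (hnonneg x)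
    rw [mul_sub, mul_one] at h1
    exact h1
  have hMint : (∫ s in (1:ℝ)..2, φ s * M) = M := by
    rw [intervalIntegral.integral_mul_const, hφint, one_mul]
  have hsub : (∫ s in (1:ℝ)..2, (φ s - φ s * g s))
      = (∫ s in (1:ℝ)..2, φ s) - ∫ s in (1:ℝ)..2, φ s * g s :=
    intervalIntegral.integral_sub hIφ hIφg
  rw [hstep1, hstep3]
  calc 1 - ∫ s in (1:ℝ)..2, φ s * g s
      = ∫ s in (1:ℝ)..2, (φ s - φ s * g s) := by rw [hsub, hφint]
    _ ≤ ∫ s in (1:ℝ)..2, φ s * M := hmono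
    _ = M := hMint
    _ = 2 * Real.exp (-(min (ε / 4) 1 / 2 * ε * t)) := by rw [hM]
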